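/- In the LARS step, for an inactive variable j ∉ I with a_j = x_jᵀ X_I w and current correlation ĉ_j, the step size γ̂ = min over j ∉ I of the positive values among (Ĉ − ĉ_j)/(A − a_j) and (Ĉ + ĉ_j)/(A + a_j) is the smallest γ > 0 at which some inactive variable attains the (common, decreasing) absolute correlation Ĉ − γA of the active variables: |ĉ_j − γ a_j| = Ĉ − γA. -/
import Mathlib


open Matrix

/-- LARS step size: with `|c j| < C` for inactive `j ∉ I`, `A > 0`, and
`A ≠ ±a j`, the quantity
`γ̂ = min⁺_{j ∉ I} {(C − c j)/(A − a j), (C + c j)/(A + a j)}`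
is the smallest `γ > 0` at which some inactive variable attains the common
decreasing absolute correlation of the active variables:
`|c j − γ a j| = C − γ A`. -/
theorem lars_step_size {d : ℕ} (I : Finset (Fin d)) (c a : Fin d → ℝ) (C A : ℝ)
    (hA : 0 < A) (hc : ∀ j ∉ I, |c j| < C)
    (hne : ∀ j ∉ I, A ≠ a j ∧ A ≠ -a j)
    (γhat : ℝ)
    (hγhat : IsLeast
      {γ : ℝ | 0 < γ ∧ ∃ j ∉ I,
        γ = (C - c j) / (A - a j) ∨ γ = (C + c j) / (A + a j)} γhat) :
    IsLeast {γ : ℝ | 0 < γ ∧ ∃ j ∉ I, |c j - γ * a j| = C - γ * A} γhat := by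
  obtain ⟨⟨hγpos, j, hj, hcase⟩, hlb⟩ := hγhat
  have hcj := abs_lt.mp (hc j hj)
  have hCpos : 0 < C := lt_of_le_of_lt (abs_nonneg _) (hc j hj)
  have hne1 : A - a j ≠ 0 := sub_ne_zero.mpr (hne j hj).1
  have hne2 : A + a j ≠ 0 := by
    have h := (hne j hj).2; intro h'; apply h; linarith
  have key : γhat * A ≤ C := by
    rcases le_or_gt (C * a j) (A * c j) with h | h
    · have hd : 0 < A - a j := by
        rcases lt_or_ge (a j) A with h' | h'
        · linarith
        · nlinarith
      have hu : 0 < (C - c j) / (A - a j) := div_pos (by linarith) hd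
      have hle : γhat ≤ (C - c j) / (A - a j) := hlb ⟨hu, j, hj, Or.inl rfl⟩
      have h2 : (C - c j) / (A - a j) * A ≤ C := by
        rw [div_mul_eq_mul_div, div_le_iff₀ hd]; nlinarith
      nlinarith
    · have hd : 0 < A + a j := by
        rcases lt_or_ge (-A) (a j) with h' | h'
        · linarith
        · nlinarith
      have hu : 0 < (C + c j) / (A + a j) := div_pos (by linarith) hd
      have hle : γhat ≤ (C + c j) / (A + a j) := hlb ⟨hu, j, hj, Or.inr rfl⟩
      have h2 : (C + c j) / (A + a j) * A ≤ C := by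
        rw [div_mul_eq_mul_div, div_le_iff₀ hd]; nlinarith
      nlinarith
  constructor
  · refine ⟨hγpos, j, hj, ?_⟩
    rcases hcase with h | h
    · have h2 : γhat * (A - a j) = C - c j := by
        rw [h]; field_simp
      rw [abs_of_nonneg (by nlinarith)]; nlinarith
    · have h2 : γhat * (A + a j) = C + c j := by
        rw [h]; field_simp
      rw [abs_of_nonpos (by nlinarith)]; nlinarith
  · rintro γ ⟨hγ, k, hk, habs⟩
    have hk1 : A - a k ≠ 0 := sub_ne_zero.mpr (hne k hk).1
    have hk2 : A + a k ≠ 0 := by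
      have h := (hne k hk).2; intro h'; apply h; linarith
    have hnn : (0:ℝ) ≤ C - γ * A := habs ▸ abs_nonneg _
    rcases (abs_eq hnn).mp habs with h | h
    · exact hlb ⟨hγ, k, hk, Or.inl (by rw [eq_div_iff hk1]; linarith)⟩
    · exact hlb ⟨hγ, k, hk, Or.inr (by rw [eq_div_iff hk2]; linarith)⟩
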